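/- arXiv:1409.6863 — 2 statements merged into one kernel-verified Lean document; each statement's English description precedes it below -/
import Mathlib

section
/- Let ρ_S : ℤ/3 * ℤ/3 → SL(2,ℂ) be a homomorphism from the free product of two cyclic groups of order 3 with generators k₀, k₁, and let ρ_H be its restriction to the subgroup generated by k₀k₁ and k₁k₀ (which is free of rank 2). Then ρ_S is injective if and only if ρ_H is injective. -/
open Matrix

/-- The free product `ℤ/3 * ℤ/3`. -/
abbrev Z3Z3 : Type := Monoid.Coprod (Multiplicative (ZMod 3)) (Multiplicative (ZMod 3))

/-- The generator `k₀` of the first free factor. -/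
def k₀ : Z3Z3 := Monoid.Coprod.inl (Multiplicative.ofAdd (1 : ZMod 3))

/-- The generator `k₁` of the second free factor. -/
def k₁ : Z3Z3 := Monoid.Coprod.inr (Multiplicative.ofAdd (1 : ZMod 3))

/-!
Let `N` be the kernel of `ρS` and `φ : ℤ/3 * ℤ/3 → ℤ/3` the map with `k₀ ↦ 1`, `k₁ ↦ -1`. Since
conjugation by `k₀` preserves `H = ⟨k₀k₁, k₁k₀⟩`, every `g` lies in the coset `k₀^φ(g) H`, so `H`
contains `ker φ` and with it all commutators and cubes. If `N ∩ H = 1`, then `[N, G] ⊆ N ∩ H` is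
trivial and `g³ ∈ N ∩ H` for `g ∈ N`: every element of `N` is central of exponent `3`. Such an
element of `ℤ/3 * ℤ/3` is trivial. If its reduced word `w` begins and ends in the same factor, then
`x w x⁻¹ w⁻¹` is a nonempty reduced word for any `x ≠ 1` of the other factor. Otherwise, with `ℓ`
the last letter of `w`, the reduced word of `w ℓ` still runs from one factor to the other (it ends
in `ℓ² ≠ 1`), so its cube is a nonempty reduced word, yet `(w ℓ)³ = w³ ℓ³ = 1`.
-/

theorem Subgroup.ker_le_center_of_disjoint_ker {G K A : Type*} [Group G] [Group K] [CommGroup A]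
    (ρ : G →* K) (φ : G →* A) (h : Disjoint ρ.ker φ.ker) : ρ.ker ≤ center G := by
  rw [← centralizer_univ, ← coe_top, ← commutator_eq_bot_iff_le_centralizer, eq_bot_iff]
  exact (le_inf (commutator_le_left _ _) ((commutator_mono le_top le_top).trans
    (Abelianization.commutator_subset_ker φ))).trans h.le_bot

section PowThree

variable {G : Type*} [Group G] {a b : G}

theorem conj_mem_closure_mul_of_pow_three (ha : a ^ 3 = 1) (hb : b ^ 3 = 1) {h : G}
    (hh : h ∈ Subgroup.closure {a * b, b * a}) :
    a * h * a⁻¹ ∈ Subgroup.closure {a * b, b * a} := by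
  have hab : a * (a * b) * a⁻¹ = (a * b * (b * a))⁻¹ := by
    rw [eq_inv_iff_mul_eq_one]
    calc a * (a * b) * a⁻¹ * (a * b * (b * a)) = a ^ 2 * b ^ 3 * a := by
          simp only [pow_succ, pow_zero, one_mul]; group
      _ = a ^ 3 := by rw [hb]; group
      _ = 1 := ha
  have hmap : (Subgroup.closure {a * b, b * a}).map (MulAut.conj a).toMonoidHom ≤
      Subgroup.closure {a * b, b * a} := by
    rw [MonoidHom.map_closure, Subgroup.closure_le]
    rintro _ ⟨s, rfl | rfl, rfl⟩
    · simp only [MulEquiv.coe_toMonoidHom, MulAut.conj_apply, hab]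
      exact inv_mem (mul_mem (Subgroup.subset_closure (by simp))
        (Subgroup.subset_closure (by simp)))
    · simp only [MulEquiv.coe_toMonoidHom, MulAut.conj_apply]
      rw [show a * (b * a) * a⁻¹ = a * b by group]
      exact Subgroup.subset_closure (by simp)
  exact hmap ⟨h, hh, rfl⟩

theorem conj_pow_mem_closure_mul_of_pow_three (ha : a ^ 3 = 1) (hb : b ^ 3 = 1) (n : ℕ) {h : G}
    (hh : h ∈ Subgroup.closure {a * b, b * a}) :
    a ^ n * h * (a ^ n)⁻¹ ∈ Subgroup.closure {a * b, b * a} := by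
  induction n with
  | zero => simpa using hh
  | succ n ih =>
    rw [pow_succ', show a * a ^ n * h * (a * a ^ n)⁻¹ = a * (a ^ n * h * (a ^ n)⁻¹) * a⁻¹ by group]
    exact conj_mem_closure_mul_of_pow_three ha hb ih

end PowThree

namespace Monoid.CoprodI

variable {ι : Type*} {M : ι → Type*}

theorem NeWord.prod_ne_one [DecidableEq ι] [∀ i, Monoid (M i)] [∀ i, DecidableEq (M i)]
    {i j : ι} (w : NeWord M i j) : w.prod ≠ 1 := fun h =>
  w.toList_ne_nil <| congrArg Word.toList <| Word.equiv.symm.injective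
    (show Word.equiv.symm w.toWord = Word.equiv.symm Word.empty from h.trans Word.prod_empty.symm)

theorem NeWord.last_ne_one [∀ i, Monoid (M i)] {i j : ι} (w : NeWord M i j) : w.last ≠ 1 := by
  induction w with
  | singleton x hx => exact hx
  | append _ _ _ _ ih => exact ih

theorem eq_one_of_mem_center_of_pow_three [Nontrivial ι] [∀ i, Group (M i)]
    [∀ i, Nontrivial (M i)] (hM : ∀ i (x : M i), x ^ 3 = 1) {g : CoprodI M}
    (hg : g ∈ Subgroup.center (CoprodI M)) (hg3 : g ^ 3 = 1) : g = 1 := by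
  classical
  by_contra hg1
  obtain ⟨i, j, w, hw⟩ := NeWord.of_word (Word.equiv g)
    fun h => hg1 (Word.equiv.injective (h.trans (one_smul (CoprodI M) Word.empty).symm))
  have hwg : w.prod = g := by rw [NeWord.prod, hw]; exact Word.equiv.symm_apply_apply g
  have hcomm (y : CoprodI M) : y * g = g * y := Subgroup.mem_center_iff.1 hg y
  rcases eq_or_ne i j with rfl | hij
  · obtain ⟨k, hk⟩ := exists_ne i
    obtain ⟨x, hx⟩ := exists_ne (1 : M k)
    let z : NeWord M k i :=
      .append (.append (.append (.singleton x hx) hk w) hk.symm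
        (.singleton x⁻¹ (inv_ne_one.2 hx))) hk w.inv
    refine z.prod_ne_one ?_
    simp only [z, NeWord.append_prod, NeWord.prod_singleton, NeWord.inv_prod, hwg, map_inv, hcomm]
    group
  · have hlast : w.last ^ 2 ≠ 1 := fun h => w.last_ne_one (by
      rw [← hM j w.last, pow_succ, h, one_mul])
    let b : NeWord M i j := (w.inv.mulHead w.last⁻¹ (by
      rwa [NeWord.inv_head, ← _root_.mul_inv_rev, inv_ne_one, ← sq])).inv
    have hb : b.prod = g * of w.last := by
      simp [b, NeWord.inv_prod, NeWord.mulHead_prod, hwg]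
    refine (b.append hij.symm (b.append hij.symm b)).prod_ne_one ?_
    rw [NeWord.append_prod, NeWord.append_prod, hb, ← pow_three,
      (Commute.mul_pow (hcomm (of w.last)).symm), hg3, ← map_pow, hM, map_one, one_mul]

end Monoid.CoprodI

namespace Monoid.Coprod

def equivCoprodI (G : Type*) [Monoid G] : Coprod G G ≃* CoprodI (fun _ : Bool => G) :=
  MonoidHom.toMulEquiv
    (lift (CoprodI.of (M := fun _ : Bool => G) (i := false))
      (CoprodI.of (M := fun _ : Bool => G) (i := true)))
    (CoprodI.lift fun b => cond b inr inl)
    (hom_ext (MonoidHom.ext fun _ => by simp) (MonoidHom.ext fun _ => by simp))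
    (CoprodI.ext_hom _ _ fun b => by cases b <;> exact MonoidHom.ext fun _ => by simp)

theorem eq_one_of_mem_center_of_pow_three {G : Type*} [Group G] [Nontrivial G]
    (hG : ∀ x : G, x ^ 3 = 1) {g : Coprod G G} (hg : g ∈ Subgroup.center (Coprod G G))
    (hg3 : g ^ 3 = 1) : g = 1 := by
  set e := equivCoprodI G
  refine e.map_eq_one_iff.1 (CoprodI.eq_one_of_mem_center_of_pow_three (fun _ => hG) ?_
    (by rw [← map_pow, hg3, map_one]))
  refine Subgroup.mem_center_iff.2 fun y => ?_
  obtain ⟨x, rfl⟩ := e.surjective y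
  rw [← map_mul, ← map_mul, Subgroup.mem_center_iff.1 hg]

end Monoid.Coprod

theorem zmod_three_pow_three_eq_one (x : Multiplicative (ZMod 3)) : x ^ 3 = 1 := by
  revert x
  decide

local notation "C₃" => Multiplicative (ZMod 3)
local notation "H" => Subgroup.closure ({k₀ * k₁, k₁ * k₀} : Set Z3Z3)

namespace Z3Z3

open Monoid.Coprod Multiplicative

def toZ3 : Z3Z3 →* C₃ := lift (MonoidHom.id C₃) invMonoidHom

theorem k₀_pow_three : k₀ ^ 3 = 1 := by
  rw [k₀, ← map_pow, zmod_three_pow_three_eq_one, map_one]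

theorem k₁_pow_three : k₁ ^ 3 = 1 := by
  rw [k₁, ← map_pow, zmod_three_pow_three_eq_one, map_one]

theorem inl_eq_k₀_pow (m : C₃) : (inl m : Z3Z3) = k₀ ^ (toAdd m).val := by
  rw [k₀, ← map_pow]
  congr 1
  revert m
  decide

theorem conj_inl_mem (m : C₃) {h : Z3Z3} (hh : h ∈ H) : inl m * h * (inl m)⁻¹ ∈ H := by
  rw [inl_eq_k₀_pow]
  exact conj_pow_mem_closure_mul_of_pow_three k₀_pow_three k₁_pow_three _ hh

theorem inl_mul_inr_mem (m : C₃) : (inl m * inr m : Z3Z3) ∈ H := by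
  have hk : k₀ * k₁ ∈ H := Subgroup.subset_closure (Set.mem_insert _ _)
  obtain rfl | rfl | rfl : m = 1 ∨ m = ofAdd 1 ∨ m = ofAdd 1 ^ 2 := by revert m; decide
  · simp
  · exact hk
  · rw [map_pow, map_pow]
    change k₀ ^ 2 * k₁ ^ 2 ∈ H
    rw [show k₀ ^ 2 * k₁ ^ 2 = k₀ * (k₀ * k₁) * k₀⁻¹ * (k₀ * k₁) by rw [sq, sq]; group]
    exact mul_mem (conj_mem_closure_mul_of_pow_three k₀_pow_three k₁_pow_three hk) hk

theorem inl_toZ3_inv_mul_mem (g : Z3Z3) : inl (toZ3 g)⁻¹ * g ∈ H := by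
  induction g using Monoid.Coprod.induction_on' with
  | one => simp
  | inl_mul m x ih =>
    convert ih using 1
    simp only [toZ3, map_mul, lift_apply_inl, MonoidHom.id_apply, _root_.mul_inv_rev, map_inv]
    group
  | inr_mul m x ih =>
    have hsplit : inl (toZ3 (inr m * x))⁻¹ * (inr m * x) =
        inl (toZ3 x)⁻¹ * (inl m * inr m) * (inl (toZ3 x)⁻¹)⁻¹ * (inl (toZ3 x)⁻¹ * x) := by
      simp only [toZ3, map_mul, lift_apply_inr, invMonoidHom_apply, _root_.mul_inv_rev, inv_inv,
        map_inv]
      group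
    rw [hsplit]
    exact mul_mem (conj_inl_mem _ (inl_mul_inr_mem m)) ih

theorem ker_toZ3_le : toZ3.ker ≤ H := fun g hg => by
  simpa [(MonoidHom.mem_ker).1 hg] using inl_toZ3_inv_mul_mem g

end Z3Z3

open Z3Z3 in
theorem faithful_iff_faithful_on_free_subgroup
    (ρS : Z3Z3 →* Matrix.SpecialLinearGroup (Fin 2) ℂ) :
    Function.Injective ρS ↔
      Function.Injective
        (fun h : Subgroup.closure ({k₀ * k₁, k₁ * k₀} : Set Z3Z3) => ρS (h : Z3Z3)) := by
  refine ⟨fun h => h.comp Subtype.val_injective, fun hH => ?_⟩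
  have hdisj : Disjoint ρS.ker toZ3.ker := Subgroup.disjoint_def.2 fun {g} hρ hφ =>
    congrArg Subtype.val (hH (a₁ := ⟨g, ker_toZ3_le hφ⟩) (a₂ := 1) (by simpa using hρ))
  refine (injective_iff_map_eq_one ρS).2 fun g hg => ?_
  refine Monoid.Coprod.eq_one_of_mem_center_of_pow_three zmod_three_pow_three_eq_one
    (Subgroup.ker_le_center_of_disjoint_ker ρS toZ3 hdisj hg) ?_
  exact Subgroup.disjoint_def.1 hdisj (by simp [hg]) (by simp [zmod_three_pow_three_eq_one])
end

section
/- With the trace polynomials T_{p/q}(x) defined by the recursion T_{0/1} = x, T_{1/0} = 2, T_{1/1} = 1−x and new vertex label 2 − uv − w, one has T_{p/q}(x) = T_{(p+q)/q}(1 − x) for all p/q. -/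
/-!
Both `T` and `(p, q) ↦ T (p + q) q ∘ (1 - X)` solve the recursion: the shear `(p, q) ↦ (p + q, q)`
preserves `p * s - r * q`, and composition with `1 - X` is a ring endomorphism. They also agree at
`1/0`, `0/1` and `1/1`. Two solutions that agree at the columns `u`, `v` of some `g ∈ SL(2, ℤ)`
and at `u + v` still do so after multiplying `g` on the right by a generator `S`, `T` of `SL(2, ℤ)`
or its inverse, because the recursion and the symmetry under `u ↦ -u` determine the value at
`u - v` from those three. Since every coprime pair is a column of some `g ∈ SL(2, ℤ)`, the two
solutions agree at every coprime pair.
-/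

open Polynomial

/-- The Farey recursion for trace polynomials, with the fraction `p/q` encoded by the pair
`(p, q)` up to sign, and `p/q`, `r/s` Farey neighbours when `p * s - r * q = 1`. -/
structure IsTraceRecursion {R : Type*} [Ring R] (T : ℤ → ℤ → R) : Prop where
  neg : ∀ p q : ℤ, T (-p) (-q) = T p q
  add : ∀ p q r s : ℤ, p * s - r * q = 1 →
    T (p + r) (q + s) = 2 - T p q * T r s - T (p - r) (q - s)

namespace IsTraceRecursion

variable {R : Type*} [Ring R] {T T' : ℤ → ℤ → R}

lemma sub (hT : IsTraceRecursion T) {p q r s : ℤ} (h : p * s - r * q = 1) :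
    T (p - r) (q - s) = 2 - T p q * T r s - T (p + r) (q + s) := by
  rw [hT.add p q r s h]
  abel

lemma map {R' : Type*} [Ring R'] (hT : IsTraceRecursion T) (φ : R →+* R') :
    IsTraceRecursion fun p q ↦ φ (T p q) where
  neg p q := by rw [hT.neg]
  add p q r s h := by rw [hT.add p q r s h, map_sub, map_sub, map_mul, map_ofNat]

lemma comp_shear (hT : IsTraceRecursion T) : IsTraceRecursion fun p q ↦ T (p + q) q where
  neg p q := by rw [← neg_add, hT.neg]
  add p q r s h := by
    rw [show p + r + (q + s) = p + q + (r + s) by ring,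
      show p - r + (q - s) = p + q - (r + s) by ring]
    exact hT.add _ _ _ _ (by linear_combination h)

def EqOnTriangle (T T' : ℤ → ℤ → R) (p q r s : ℤ) : Prop :=
  T p q = T' p q ∧ T r s = T' r s ∧ T (p + r) (q + s) = T' (p + r) (q + s)

variable (hT : IsTraceRecursion T) (hT' : IsTraceRecursion T')
include hT hT'

lemma eq_sub_of_eqOnTriangle {p q r s : ℤ} (h : p * s - r * q = 1)
    (hE : EqOnTriangle T T' p q r s) : T (p - r) (q - s) = T' (p - r) (q - s) := by
  obtain ⟨h₁, h₂, h₃⟩ := hE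
  rw [hT.sub h, hT'.sub h, h₁, h₂, h₃]

lemma eqOnTriangle_neg {p q r s : ℤ} (hE : EqOnTriangle T T' p q r s) :
    EqOnTriangle T T' (-p) (-q) (-r) (-s) := by
  obtain ⟨h₁, h₂, h₃⟩ := hE
  refine ⟨?_, ?_, ?_⟩
  · rw [hT.neg, hT'.neg, h₁]
  · rw [hT.neg, hT'.neg, h₂]
  · rw [← neg_add, ← neg_add, hT.neg, hT'.neg, h₃]

lemma eqOnTriangle_rotate {p q r s : ℤ} (h : p * s - r * q = 1)
    (hE : EqOnTriangle T T' p q r s) : EqOnTriangle T T' r s (-p) (-q) := by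
  refine ⟨hE.2.1, by rw [hT.neg, hT'.neg, hE.1], ?_⟩
  rw [← sub_eq_add_neg, ← sub_eq_add_neg, ← neg_sub p r, ← neg_sub q s, hT.neg, hT'.neg]
  exact eq_sub_of_eqOnTriangle hT hT' h hE

lemma eqOnTriangle_shear {p q r s : ℤ} (h : p * s - r * q = 1)
    (hE : EqOnTriangle T T' p q r s) : EqOnTriangle T T' p q (p + r) (q + s) := by
  refine ⟨hE.1, hE.2.2, ?_⟩
  have hE' : EqOnTriangle T T' (p + r) (q + s) (-p) (-q) :=
    ⟨hE.2.2, by rw [hT.neg, hT'.neg, hE.1], by simpa using hE.2.1⟩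
  have := eq_sub_of_eqOnTriangle hT hT' (by linear_combination h) hE'
  rwa [sub_neg_eq_add, sub_neg_eq_add, add_comm (p + r), add_comm (q + s)] at this

lemma eqOnTriangle_unshear {p q r s : ℤ} (h : p * s - r * q = 1)
    (hE : EqOnTriangle T T' p q r s) : EqOnTriangle T T' p q (r - p) (s - q) := by
  refine ⟨hE.1, ?_, by simpa using hE.2.1⟩
  rw [← hT.neg, ← hT'.neg, neg_sub, neg_sub]
  exact eq_sub_of_eqOnTriangle hT hT' h hE

open MatrixGroups in
lemma eqOnTriangle_of_specialLinearGroup (h10 : T 1 0 = T' 1 0) (h01 : T 0 1 = T' 0 1)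
    (h11 : T 1 1 = T' 1 1) (g : SL(2, ℤ)) :
    EqOnTriangle T T' (g 0 0) (g 1 0) (g 0 1) (g 1 1) := by
  have hdet (g : SL(2, ℤ)) : g 0 0 * g 1 1 - g 0 1 * g 1 0 = 1 :=
    (Matrix.det_fin_two _).symm.trans g.det_coe
  have hg : g ∈ Subgroup.closure {ModularGroup.S, ModularGroup.T} := by
    simp [SpecialLinearGroup.SL2Z_generators]
  induction hg using Subgroup.closure_induction_right with
  | one => simpa using ⟨h10, h01, h11⟩
  | mul_right g _ y hy ih =>
    rcases hy with rfl | rfl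
    · simpa [Matrix.mul_apply, Fin.sum_univ_two] using eqOnTriangle_rotate hT hT' (hdet g) ih
    · simpa [Matrix.mul_apply, Fin.sum_univ_two] using eqOnTriangle_shear hT hT' (hdet g) ih
  | mul_inv_cancel g _ y hy ih =>
    rcases hy with rfl | rfl
    · simpa [ModularGroup.S_inv, Matrix.mul_apply, Fin.sum_univ_two] using
        eqOnTriangle_neg hT hT' (eqOnTriangle_rotate hT hT' (hdet g) ih)
    · simpa [ModularGroup.coe_T_inv, Matrix.mul_apply, Fin.sum_univ_two, neg_add_eq_sub] using
        eqOnTriangle_unshear hT hT' (hdet g) ih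

lemma eq_of_isCoprime (h10 : T 1 0 = T' 1 0) (h01 : T 0 1 = T' 0 1) (h11 : T 1 1 = T' 1 1)
    {p q : ℤ} (hpq : IsCoprime p q) : T p q = T' p q := by
  obtain ⟨a, b, hab⟩ := hpq
  let g : Matrix.SpecialLinearGroup (Fin 2) ℤ :=
    ⟨!![p, -b; q, a], by rw [Matrix.det_fin_two_of]; linear_combination hab⟩
  exact (eqOnTriangle_of_specialLinearGroup hT hT' h10 h01 h11 g).1

end IsTraceRecursion

theorem trace_polynomial_symmetry
    (T : ℤ → ℤ → Polynomial ℂ)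
    (h01 : T 0 1 = Polynomial.X)
    (h10 : T 1 0 = 2)
    (h11 : T 1 1 = 1 - Polynomial.X)
    (hneg : ∀ p q : ℤ, T (-p) (-q) = T p q)
    (hrec : ∀ p q r s : ℤ, p * s - r * q = 1 →
      T (p + r) (q + s) = 2 - T p q * T r s - T (p - r) (q - s)) :
    ∀ p q : ℤ, IsCoprime p q →
      T p q = (T (p + q) q).comp (1 - Polynomial.X) := by
  have hT : IsTraceRecursion T := ⟨hneg, hrec⟩
  have h21 : T 2 1 = X := by
    have h := hrec 1 0 1 1 (by norm_num)
    have h0 := hneg 0 1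
    norm_num at h h0
    rw [h, h10, h11, h0, h01]
    ring
  intro p q hpq
  refine hT.eq_of_isCoprime (hT.comp_shear.map (compRingHom (1 - X))) ?_ ?_ ?_ hpq <;>
    simp [h01, h10, h11, h21]
end
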